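/- Let u : ℝ⁴ → ℝ be a smooth function of (x¹, x², x³, x⁴) satisfying Plebański's second heavenly equation u_{13} + u_{24} + u_{11} u_{22} − u_{12}² = 0, where u_{ij} denotes ∂²u/∂xⁱ∂xʲ. Then for every λ ∈ ℝ the vector fields X₁ = ∂₄ + u_{11} ∂₂ − u_{12} ∂₁ + λ ∂₁ and X₂ = ∂₃ − u_{12} ∂₂ + u_{22} ∂₁ − λ ∂₂ commute: [X₁, X₂] = 0. -/

import Mathlib

noncomputable def pd {n : ℕ} (i : Fin n) (f : (Fin n → ℝ) → ℝ) (p : Fin n → ℝ) : ℝ :=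
  fderiv ℝ f p (Pi.single i 1)

section Helpers

variable {n : ℕ} {f g : (Fin n → ℝ) → ℝ} {p : Fin n → ℝ}

lemma pd_contDiff (hf : ContDiff ℝ (⊤ : ℕ∞) f) (i : Fin n) : ContDiff ℝ (⊤ : ℕ∞) (pd i f) :=
  (hf.fderiv_right (by simp)).clm_apply contDiff_const

lemma pd_comm (hf : ContDiff ℝ (⊤ : ℕ∞) f) (i j : Fin n) (p) :
    pd i (pd j f) p = pd j (pd i f) p := by
  have hsymm : IsSymmSndFDerivAt ℝ f p := hf.contDiffAt.isSymmSndFDerivAt (by rw [minSmoothness_of_isRCLikeNormedField]; exact WithTop.coe_le_coe.mpr (le_top : (2 : ℕ∞) ≤ ⊤))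
  have hdf : DifferentiableAt ℝ (fderiv ℝ f) p :=
    ((hf.fderiv_right (m := (⊤ : ℕ∞)) (by simp)).differentiable (by simp)) p
  have key : ∀ v w : Fin n → ℝ,
      fderiv ℝ (fun q => fderiv ℝ f q v) p w = fderiv ℝ (fderiv ℝ f) p w v := by
    intro v w
    rw [fderiv_clm_apply hdf (differentiableAt_const _)]
    simp
  have hj : pd j f = fun q => fderiv ℝ f q (Pi.single j 1) := rfl
  have hi : pd i f = fun q => fderiv ℝ f q (Pi.single i 1) := rfl
  simp only [pd, hj, hi]
  rw [key, key, hsymm]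

lemma pd_const (i : Fin n) (c : ℝ) (p) : pd i (fun _ => c) p = 0 := by
  simp [pd]

lemma pd_add (hf : DifferentiableAt ℝ f p) (hg : DifferentiableAt ℝ g p) (i : Fin n) :
    pd i (fun q => f q + g q) p = pd i f p + pd i g p := by
  simp [pd, fderiv_fun_add hf hg]

lemma pd_sub (hf : DifferentiableAt ℝ f p) (hg : DifferentiableAt ℝ g p) (i : Fin n) :
    pd i (fun q => f q - g q) p = pd i f p - pd i g p := by
  simp [pd, fderiv_fun_sub hf hg]

lemma pd_mul (hf : DifferentiableAt ℝ f p) (hg : DifferentiableAt ℝ g p) (i : Fin n) :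
    pd i (fun q => f q * g q) p = f p * pd i g p + g p * pd i f p := by
  simp [pd, fderiv_fun_mul hf hg]

lemma pd_sq (hf : DifferentiableAt ℝ f p) (i : Fin n) :
    pd i (fun q => f q ^ 2) p = 2 * f p * pd i f p := by
  have h : (fun q => f q ^ 2) = fun q => f q * f q := by funext q; ring
  rw [h, pd_mul hf hf]; ring

lemma pd_neg_add_const (_hf : DifferentiableAt ℝ f p) (i : Fin n) (c : ℝ) :
    pd i (fun q => -(f q) + c) p = -(pd i f p) := by
  simp [pd, fderiv_add_const, fderiv_neg]

lemma pd_neg_sub_const (_hf : DifferentiableAt ℝ f p) (i : Fin n) (c : ℝ) :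
    pd i (fun q => -(f q) - c) p = -(pd i f p) := by
  simp [pd, fderiv_sub_const, fderiv_neg]

end Helpers

noncomputable def lieBracket {n : ℕ} (X Y : (Fin n → ℝ) → (Fin n → ℝ)) (p : Fin n → ℝ) :
    Fin n → ℝ :=
  fun i => (∑ j, X p j * pd j (fun q => Y q i) p) - (∑ j, Y p j * pd j (fun q => X q i) p)

/-- The Lax pair of Plebański's second heavenly equation commutes on every solution. -/
theorem second_heavenly_lax_pair_commutes
    (u : (Fin 4 → ℝ) → ℝ) (hu : ContDiff ℝ (⊤ : ℕ∞) u)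
    (heq : ∀ q : Fin 4 → ℝ,
      pd 0 (pd 2 u) q + pd 1 (pd 3 u) q
        + pd 0 (pd 0 u) q * pd 1 (pd 1 u) q - (pd 0 (pd 1 u) q) ^ 2 = 0)
    (lam : ℝ) (X₁ X₂ : (Fin 4 → ℝ) → (Fin 4 → ℝ))
    (hX₁ : ∀ p : Fin 4 → ℝ, X₁ p = ![-(pd 0 (pd 1 u) p) + lam, pd 0 (pd 0 u) p, 0, 1])
    (hX₂ : ∀ p : Fin 4 → ℝ, X₂ p = ![pd 1 (pd 1 u) p, -(pd 0 (pd 1 u) p) - lam, 1, 0]) :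
    ∀ p : Fin 4 → ℝ, lieBracket X₁ X₂ p = 0 := by
  intro p
  have hcd : ∀ i j : Fin 4, ContDiff ℝ (⊤ : ℕ∞) (pd i (pd j u)) :=
    fun i j => pd_contDiff (pd_contDiff hu j) i
  have hd : ∀ (i j : Fin 4) (q : Fin 4 → ℝ), DifferentiableAt ℝ (pd i (pd j u)) q :=
    fun i j q => ((hcd i j).differentiable (by simp)) q
  -- the differentiated heavenly equation
  have hD : ∀ (j : Fin 4) (q : Fin 4 → ℝ),
      pd j (pd 0 (pd 2 u)) q + pd j (pd 1 (pd 3 u)) q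
        + (pd 0 (pd 0 u) q * pd j (pd 1 (pd 1 u)) q + pd 1 (pd 1 u) q * pd j (pd 0 (pd 0 u)) q)
        - 2 * pd 0 (pd 1 u) q * pd j (pd 0 (pd 1 u)) q = 0 := by
    intro j q
    have h0 : (fun q => pd 0 (pd 2 u) q + pd 1 (pd 3 u) q
        + pd 0 (pd 0 u) q * pd 1 (pd 1 u) q - pd 0 (pd 1 u) q ^ 2) = fun _ => (0:ℝ) :=
      funext heq
    have H : pd j (fun q => pd 0 (pd 2 u) q + pd 1 (pd 3 u) q
        + pd 0 (pd 0 u) q * pd 1 (pd 1 u) q - pd 0 (pd 1 u) q ^ 2) q = 0 := by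
      rw [h0]; exact pd_const _ _ _
    have hA : DifferentiableAt ℝ (fun q => pd 0 (pd 2 u) q + pd 1 (pd 3 u) q
        + pd 0 (pd 0 u) q * pd 1 (pd 1 u) q) q :=
      ((hd 0 2 q).add (hd 1 3 q)).add ((hd 0 0 q).mul (hd 1 1 q))
    have hB : DifferentiableAt ℝ (fun q => pd 0 (pd 1 u) q ^ 2) q := (hd 0 1 q).pow 2
    rw [pd_sub hA hB, pd_add (f := fun q => pd 0 (pd 2 u) q + pd 1 (pd 3 u) q)
      (g := fun q => pd 0 (pd 0 u) q * pd 1 (pd 1 u) q) ((hd 0 2 q).add (hd 1 3 q))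
      ((hd 0 0 q).mul (hd 1 1 q)),
      pd_add (hd 0 2 q) (hd 1 3 q), pd_mul (hd 0 0 q) (hd 1 1 q), pd_sq (hd 0 1 q)] at H
    linarith [H]
  -- swap of the two inner derivatives of u (as functions)
  have iswap : ∀ i j : Fin 4, pd i (pd j u) = pd j (pd i u) :=
    fun i j => funext fun q => pd_comm hu i j q
  -- third-derivative symmetry facts at p
  have C0 : pd 0 (pd 1 (pd 1 u)) p = pd 1 (pd 0 (pd 1 u)) p :=
    pd_comm (pd_contDiff hu 1) 0 1 p
  have A1 : pd 1 (pd 0 (pd 0 u)) p = pd 0 (pd 0 (pd 1 u)) p := by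
    calc pd 1 (pd 0 (pd 0 u)) p = pd 0 (pd 1 (pd 0 u)) p := pd_comm (pd_contDiff hu 0) 1 0 p
      _ = pd 0 (pd 0 (pd 1 u)) p := by rw [iswap 1 0]
  have E1 : pd 1 (pd 0 (pd 2 u)) p = pd 2 (pd 0 (pd 1 u)) p := by
    calc pd 1 (pd 0 (pd 2 u)) p = pd 0 (pd 1 (pd 2 u)) p := pd_comm (pd_contDiff hu 2) 1 0 p
      _ = pd 0 (pd 2 (pd 1 u)) p := by rw [iswap 1 2]
      _ = pd 2 (pd 0 (pd 1 u)) p := pd_comm (pd_contDiff hu 1) 0 2 p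
  have F1 : pd 1 (pd 1 (pd 3 u)) p = pd 3 (pd 1 (pd 1 u)) p := by
    calc pd 1 (pd 1 (pd 3 u)) p = pd 1 (pd 3 (pd 1 u)) p := by rw [iswap 1 3]
      _ = pd 3 (pd 1 (pd 1 u)) p := pd_comm (pd_contDiff hu 1) 1 3 p
  have E0 : pd 0 (pd 0 (pd 2 u)) p = pd 2 (pd 0 (pd 0 u)) p := by
    calc pd 0 (pd 0 (pd 2 u)) p = pd 0 (pd 2 (pd 0 u)) p := by rw [iswap 0 2]
      _ = pd 2 (pd 0 (pd 0 u)) p := pd_comm (pd_contDiff hu 0) 0 2 p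
  have F0 : pd 0 (pd 1 (pd 3 u)) p = pd 3 (pd 0 (pd 1 u)) p := by
    calc pd 0 (pd 1 (pd 3 u)) p = pd 0 (pd 3 (pd 1 u)) p := by rw [iswap 1 3]
      _ = pd 3 (pd 0 (pd 1 u)) p := pd_comm (pd_contDiff hu 1) 0 3 p
  have hD1 := hD 1 p
  have hD0 := hD 0 p
  rw [E1, F1, A1] at hD1
  rw [E0, F0] at hD0
  funext i
  fin_cases i <;>
    simp only [lieBracket, hX₁, hX₂, Fin.sum_univ_four, Matrix.cons_val', Matrix.cons_val_zero,
      Matrix.cons_val_one, Matrix.head_cons, Matrix.cons_val_two, Matrix.tail_cons,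
      Matrix.cons_val_three, Matrix.head_fin_const, Pi.zero_apply, Fin.isValue, Fin.mk_zero,
      Fin.mk_one, Matrix.cons_val_fin_one, Matrix.empty_val',
      show ((⟨2,by norm_num⟩ : Fin 4) = 2) from rfl,
      show ((⟨3,by norm_num⟩ : Fin 4) = 3) from rfl]
  · simp only [pd_neg_add_const (hd 0 1 p) _ lam]
    linear_combination hD1 + (lam - pd 0 (pd 1 u) p) * C0
  · simp only [pd_neg_sub_const (hd 0 1 p) _ lam]
    linear_combination (-1 : ℝ) * hD0 + (pd 0 (pd 1 u) p + lam) * A1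
      + pd 0 (pd 0 u) p * C0
  · simp [pd_const]
  · simp [pd_const]
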